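/- For positive semi-definite n×n matrices A₁, A₂, A₃ with A₃ invertible, equality D(A₁,A₃[n−1])·D(A₂,A₃[n−1]) = ((n−1)/n)·D(A₁,A₂,A₃[n−2])·det(A₃) holds if and only if A₁A₃⁻¹A₂ = 0. -/

import Mathlib

/-
Left multiplication of every argument by `A⁻¹` divides the mixed discriminant by `det A`, so it
suffices to evaluate it at `A = 1`. In dimension `N` one has `D(Z, 1, …, 1) = tr Z / N` and
`D(Z, W, 1, …, 1) = (tr Z · tr W - tr (Z W)) / (N (N - 1))`, because the matrix obtained from the
identity by replacing one or two columns has determinant a diagonal entry or a `2 × 2` minor.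
Hence the two sides of the claimed equality differ by `(det A₃)² tr (A₃⁻¹ A₁ A₃⁻¹ A₂) / N²`.
Writing `A₁ = Sᴴ S` and `A₂ = Tᴴ T`, that trace is `tr (M Mᴴ)` for `M = T A₃⁻¹ Sᴴ`, so it
vanishes iff `M = 0`, iff `A₁ A₃⁻¹ A₂ = Sᴴ Mᴴ T` vanishes.
-/

open Equiv Finset Matrix
open scoped Nat

noncomputable def mixedDisc {n : ℕ} (A : Fin n → Matrix (Fin n) (Fin n) ℝ) : ℝ :=
  (1 / (Nat.factorial n : ℝ)) *
    ∑ σ : Equiv.Perm (Fin n), Matrix.det (Matrix.of fun i j => A (σ j) i j)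

theorem Fin.sum_perm_apply_zero {M : Type*} [AddCommMonoid M] {m : ℕ} (f : Fin (m + 1) → M) :
    ∑ σ : Perm (Fin (m + 1)), f (σ 0) = m ! • ∑ p, f p := by
  rw [← Perm.decomposeFin.symm.sum_comp, Fintype.sum_prod_type]
  simp [Perm.decomposeFin_symm_apply_zero, smul_sum, Fintype.card_perm]

theorem Fin.sum_perm_apply_zero_apply_one {M : Type*} [AddCommGroup M] {m : ℕ}
    (g : Fin (m + 2) → Fin (m + 2) → M) :
    ∑ σ : Perm (Fin (m + 2)), g (σ 0) (σ 1) = m ! • ∑ p, ∑ q ∈ univ.erase p, g p q := by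
  rw [← Perm.decomposeFin.symm.sum_comp, Fintype.sum_prod_type, smul_sum]
  refine sum_congr rfl fun p _ => ?_
  simp only [Perm.decomposeFin_symm_apply_zero, Perm.decomposeFin_symm_apply_one]
  rw [Fin.sum_perm_apply_zero fun q => g p (swap 0 p q.succ)]
  congr 1
  have h := Equiv.sum_comp (swap 0 p) (g p)
  rw [Fin.sum_univ_succ, swap_apply_left] at h
  rw [sum_erase_eq_sub (mem_univ p), ← h, add_sub_cancel_left]

section det

variable {R ι : Type*} [CommRing R] [Fintype ι] [DecidableEq ι]

theorem Matrix.det_one_updateCol (p : ι) (u : ι → R) :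
    ((1 : Matrix ι ι R).updateCol p u).det = u p := by
  rw [← cramer_apply, cramer_one]
  rfl

theorem Matrix.det_one_updateCol_updateCol {p q : ι} (hpq : p ≠ q) (u v : ι → R) :
    (((1 : Matrix ι ι R).updateCol p u).updateCol q v).det = u p * v q - u q * v p := by
  -- a rank-two perturbation of `1`, whose determinant `det (1 + V * U)` is a `2 × 2` one
  let U : Matrix ι (Fin 2) R :=
    of fun i => ![u i - (1 : Matrix ι ι R) i p, v i - (1 : Matrix ι ι R) i q]
  let V : Matrix (Fin 2) ι R := of ![Pi.single p 1, Pi.single q 1]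
  have hUV : ((1 : Matrix ι ι R).updateCol p u).updateCol q v = 1 + U * V := by
    ext i j
    by_cases hjq : j = q
    · subst hjq; simp [U, V, mul_apply, Fin.sum_univ_two, hpq.symm, one_apply]
    by_cases hjp : j = p
    · subst hjp; simp [U, V, mul_apply, Fin.sum_univ_two, hpq, one_apply]
    · simp [U, V, mul_apply, Fin.sum_univ_two, hjp, hjq]
  rw [hUV, det_one_add_mul_comm, det_fin_two]
  simp [U, V, one_apply, hpq, hpq.symm]
  ring

end det

theorem mixedDisc_mul_left {n : ℕ} (M : Matrix (Fin n) (Fin n) ℝ)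
    (B : Fin n → Matrix (Fin n) (Fin n) ℝ) :
    mixedDisc (fun k => M * B k) = M.det * mixedDisc B := by
  have h : ∀ σ : Perm (Fin n),
      (of fun i j => (M * B (σ j)) i j) = M * of fun i j => B (σ j) i j := by
    intro σ; ext i j; simp [mul_apply]
  simp only [mixedDisc, h, det_mul, ← mul_sum]
  ring

theorem mixedDisc_eq_det_mul_mixedDisc_inv_mul {n : ℕ} {A : Matrix (Fin n) (Fin n) ℝ}
    (hA : IsUnit A.det) (B : Fin n → Matrix (Fin n) (Fin n) ℝ) :
    mixedDisc B = A.det * mixedDisc (fun k => A⁻¹ * B k) := by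
  rw [← mixedDisc_mul_left]
  simp only [mul_nonsing_inv_cancel_left _ _ hA]

theorem mixedDisc_eq_sum_perm_inv {n : ℕ} (B : Fin n → Matrix (Fin n) (Fin n) ℝ) :
    mixedDisc B = (1 / (n ! : ℝ)) * ∑ σ : Perm (Fin n), (of fun i j => B (σ⁻¹ j) i j).det := by
  rw [mixedDisc, ← Equiv.sum_comp (Equiv.inv (Perm (Fin n)))]
  rfl

theorem mixedDisc_ite_one {m : ℕ} (Z : Matrix (Fin (m + 1)) (Fin (m + 1)) ℝ) :
    mixedDisc (fun k => if k = 0 then Z else 1) = Z.trace / (m + 1) := by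
  have h : ∀ σ : Perm (Fin (m + 1)), (of fun i j => (if σ⁻¹ j = 0 then Z else 1) i j) =
      (1 : Matrix _ _ ℝ).updateCol (σ 0) fun i => Z i (σ 0) := by
    intro σ; ext i j
    by_cases hj : j = σ 0
    · simp [hj]
    · simp [Equiv.symm_apply_eq, hj]
  simp only [mixedDisc_eq_sum_perm_inv, h, det_one_updateCol]
  rw [Fin.sum_perm_apply_zero fun p => Z p p, nsmul_eq_mul, Nat.factorial_succ]
  push_cast
  field_simp
  rfl

theorem mixedDisc_ite_ite_one {m : ℕ} (Z W : Matrix (Fin (m + 2)) (Fin (m + 2)) ℝ) :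
    mixedDisc (fun k => if k = 0 then Z else if k = 1 then W else 1) =
      (Z.trace * W.trace - (Z * W).trace) / ((m + 2) * (m + 1)) := by
  have h : ∀ σ : Perm (Fin (m + 2)),
      (of fun i j => (if σ⁻¹ j = 0 then Z else if σ⁻¹ j = 1 then W else 1) i j) =
        ((1 : Matrix _ _ ℝ).updateCol (σ 0) fun i => Z i (σ 0)).updateCol (σ 1)
          fun i => W i (σ 1) := by
    intro σ; ext i j
    by_cases hj₁ : j = σ 1
    · simp [hj₁]
    by_cases hj₀ : j = σ 0
    · simp [hj₀]
    · simp [Equiv.symm_apply_eq, hj₀, hj₁]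
  have hdet : ∀ σ : Perm (Fin (m + 2)),
      (((1 : Matrix _ _ ℝ).updateCol (σ 0) fun i => Z i (σ 0)).updateCol (σ 1)
          fun i => W i (σ 1)).det =
        Z (σ 0) (σ 0) * W (σ 1) (σ 1) - Z (σ 1) (σ 0) * W (σ 0) (σ 1) := fun σ =>
    det_one_updateCol_updateCol (σ.injective.ne Fin.zero_ne_one) _ _
  simp only [mixedDisc_eq_sum_perm_inv, h, hdet]
  rw [Fin.sum_perm_apply_zero_apply_one fun p q => Z p p * W q q - Z q p * W p q, nsmul_eq_mul]
  have hsum : ∑ p, ∑ q ∈ univ.erase p, (Z p p * W q q - Z q p * W p q) =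
      Z.trace * W.trace - (Z * W).trace := by
    rw [sum_congr rfl fun p _ =>
      sum_erase (f := fun q => Z p p * W q q - Z q p * W p q) univ (sub_self _)]
    simp only [sum_sub_distrib, trace, Matrix.diag, mul_apply, sum_mul_sum]
    congr 1
    exact sum_comm
  rw [hsum, Nat.factorial_succ, Nat.factorial_succ]
  push_cast
  field_simp
  ring

theorem mixedDisc_ite {m : ℕ} {A : Matrix (Fin (m + 1)) (Fin (m + 1)) ℝ} (hA : IsUnit A.det)
    (X : Matrix (Fin (m + 1)) (Fin (m + 1)) ℝ) :
    mixedDisc (fun k => if k = 0 then X else A) = A.det * ((A⁻¹ * X).trace / (m + 1)) := by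
  rw [mixedDisc_eq_det_mul_mixedDisc_inv_mul hA]
  simp only [mul_ite, nonsing_inv_mul _ hA, mixedDisc_ite_one]

theorem mixedDisc_ite_ite {m : ℕ} {A : Matrix (Fin (m + 2)) (Fin (m + 2)) ℝ} (hA : IsUnit A.det)
    (X Y : Matrix (Fin (m + 2)) (Fin (m + 2)) ℝ) :
    mixedDisc (fun k => if k = 0 then X else if k = 1 then Y else A) =
      A.det * (((A⁻¹ * X).trace * (A⁻¹ * Y).trace - (A⁻¹ * X * A⁻¹ * Y).trace) /
        ((m + 2) * (m + 1))) := by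
  rw [mixedDisc_eq_det_mul_mixedDisc_inv_mul hA]
  simp only [mul_ite, nonsing_inv_mul _ hA, mixedDisc_ite_ite_one, ← Matrix.mul_assoc]

open scoped ComplexOrder MatrixOrder in
theorem Matrix.IsHermitian.trace_mul_mul_mul_eq_zero_iff {𝕜 ι : Type*} [RCLike 𝕜] [Fintype ι]
    {H X Y : Matrix ι ι 𝕜} (hH : H.IsHermitian) (hX : X.PosSemidef) (hY : Y.PosSemidef) :
    (H * X * H * Y).trace = 0 ↔ X * H * Y = 0 := by
  classical
  refine ⟨fun h => ?_, fun h => ?_⟩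
  swap
  · rw [Matrix.mul_assoc, Matrix.mul_assoc, ← Matrix.mul_assoc X, h, Matrix.mul_zero, trace_zero]
  obtain ⟨S, rfl⟩ := CStarAlgebra.nonneg_iff_eq_star_mul_self.mp hX.nonneg
  obtain ⟨T, rfl⟩ := CStarAlgebra.nonneg_iff_eq_star_mul_self.mp hY.nonneg
  simp only [star_eq_conjTranspose] at h ⊢
  have hM : (T * H * Sᴴ) * (T * H * Sᴴ)ᴴ = T * (H * (Sᴴ * S) * H * Tᴴ) := by
    simp only [conjTranspose_mul, conjTranspose_conjTranspose, hH.eq, Matrix.mul_assoc]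
  have hT : T * H * Sᴴ = 0 := by
    rw [← trace_mul_conjTranspose_self_eq_zero_iff, hM, trace_mul_comm]
    simpa only [Matrix.mul_assoc] using h
  calc Sᴴ * S * H * (Tᴴ * T) = Sᴴ * (T * H * Sᴴ)ᴴ * T := by
        simp only [conjTranspose_mul, conjTranspose_conjTranspose, hH.eq, Matrix.mul_assoc]
    _ = 0 := by rw [hT, conjTranspose_zero, Matrix.mul_zero, Matrix.zero_mul]

theorem mixedDisc_mul_mixedDisc_sub {n : ℕ} {A : Matrix (Fin (n + 2)) (Fin (n + 2)) ℝ}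
    (hA : IsUnit A.det) (X Y : Matrix (Fin (n + 2)) (Fin (n + 2)) ℝ) :
    mixedDisc (fun k => if k = 0 then X else A) * mixedDisc (fun k => if k = 0 then Y else A) -
        ((n + 1 : ℝ) / (n + 2)) *
          mixedDisc (fun k => if k = 0 then X else if k = 1 then Y else A) * A.det =
      A.det ^ 2 * (A⁻¹ * X * A⁻¹ * Y).trace / (n + 2) ^ 2 := by
  rw [mixedDisc_ite hA, mixedDisc_ite hA, mixedDisc_ite_ite hA]
  push_cast
  field_simp
  ring

/-- Equality `D(A₁,A₃[n−1]) · D(A₂,A₃[n−1]) = ((n−1)/n) · D(A₁,A₂,A₃[n−2]) · det A₃`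
holds iff `A₁A₃⁻¹A₂ = 0` (the ambient dimension is `n + 2 ≥ 2`). -/
theorem mixedDisc_eq_iff {n : ℕ}
    {A₁ A₂ A₃ : Matrix (Fin (n + 2)) (Fin (n + 2)) ℝ}
    (h₁ : A₁.PosSemidef) (h₂ : A₂.PosSemidef) (h₃ : A₃.PosDef) :
    mixedDisc (fun k => if k = 0 then A₁ else A₃) *
        mixedDisc (fun k => if k = 0 then A₂ else A₃) =
      ((n + 1 : ℝ) / (n + 2)) *
        mixedDisc (fun k => if k = 0 then A₁ else if k = 1 then A₂ else A₃) * A₃.det ↔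
    A₁ * A₃⁻¹ * A₂ = 0 := by
  have hdet : A₃.det ≠ 0 := h₃.det_pos.ne'
  rw [← sub_eq_zero, mixedDisc_mul_mixedDisc_sub (isUnit_iff_ne_zero.2 hdet),
    ← h₃.isHermitian.inv.trace_mul_mul_mul_eq_zero_iff h₁ h₂]
  have hN : (n : ℝ) + 2 ≠ 0 := by positivity
  simp [hdet, hN]
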